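/- arXiv:2305.08484 — 3 statements merged into one kernel-verified Lean document; each statement's English description precedes it below -/
import Mathlib

section
/- Let X be a normed space, x̄ ∈ X and δ > 0. Then Λ†_{B_δ(x̄)}(φ1,φ2) = Λ†_{B̄_δ(x̄)}(φ1,φ2) = inf_{ρ∈(0,δ)} sup_{η>0} inf{ φ1(x1)+φ2(x2) : x1, x2 ∈ B_ρ(x̄), d(x1,x2) < η } = inf_{ρ∈(0,δ)} sup_{η>0} inf{ φ1(x1)+φ2(x2) : x1 ∈ B_ρ(x̄), x2 ∈ X, d(x1,x2) < η }, and the same value is obtained when the open balls B_ρ(x̄) in the last two expressions are replaced by the closed balls B̄_ρ(x̄). -/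
/-!
In a normed space an essentially interior subset of the closed ball `B̄_δ(x₀)` lies in some
open ball `B_ρ(x₀)` with `ρ < δ`: from a point at distance `d` one can walk a further `r` radially
outward, so `d + r ≤ δ`. These smaller balls are themselves essentially interior, so both `Λ†`
reduce to `inf_ρ Λ°_{B_ρ(x₀)}`. The closed-ball and one-sided variants at radius `ρ` are squeezed
between `Λ°_{B_ρ(x₀)}` and `Λ°_{B_ρ'(x₀)}` for any `ρ < ρ'`, hence have the same infimum.
-/

open Metric Set Filter

noncomputable section

/-- `V` is an essentially interior subset of `U`. -/
def EssInt {X : Type*} [MetricSpace X] (U V : Set X) : Prop :=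
  ∃ ρ > (0 : ℝ), ∀ v ∈ V, Metric.ball v ρ ⊆ U

/-- The uniform infimum `Λ°_W(φ1,φ2)` of the decoupled sum over `W`. -/
def lambdaCirc {X : Type*} [MetricSpace X] (φ1 φ2 : X → EReal) (W : Set X) : EReal :=
  ⨆ η : {η : ℝ // 0 < η},
    sInf {v : EReal | ∃ x1 ∈ W, ∃ x2 ∈ W, dist x1 x2 < η.1 ∧ v = φ1 x1 + φ2 x2}

/-- The quasiuniform infimum `Λ†_U(φ1,φ2)`. -/
def lambdaDag {X : Type*} [MetricSpace X] (φ1 φ2 : X → EReal) (U : Set X) : EReal :=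
  ⨅ V : {V : Set X // EssInt U V}, lambdaCirc φ1 φ2 V.1

/-- `inf_U (φ1 + φ2)`. -/
def infSum {X : Type*} [MetricSpace X] (φ1 φ2 : X → EReal) (U : Set X) : EReal :=
  sInf {v : EReal | ∃ x ∈ U, v = φ1 x + φ2 x}

/-- `(φ1 ♦ φ2)_W (x1, x2)`. -/
def diamond {X : Type*} [MetricSpace X] (φ1 φ2 : X → EReal) (W : Set X) (x1 x2 : X) : EReal :=
  sInf {v : EReal | ∃ x ∈ W,
    v = max (max ((dist x x1 : ℝ) : EReal) ((dist x x2 : ℝ) : EReal))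
        (φ1 x + φ2 x - φ1 x1 - φ2 x2)}

/-- `Θ°_U(φ1,φ2)` (with the convention `sup ∅ = 0`). -/
def thetaCirc {X : Type*} [MetricSpace X] (φ1 φ2 : X → EReal) (U : Set X) : EReal :=
  ⨅ η : {η : ℝ // 0 < η},
    sSup (insert (0 : EReal)
      {v : EReal | ∃ x1 x2 : X, φ1 x1 < ⊤ ∧ x1 ∈ U ∧ φ2 x2 < ⊤ ∧ x2 ∈ U ∧
        dist x1 x2 < η.1 ∧ v = diamond φ1 φ2 U x1 x2})

/-- `Θ†_{U,W}(φ1,φ2)`: as `Θ†_U`, but with the `♦`-expression taken over `W`. -/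
def thetaDagW {X : Type*} [MetricSpace X] (φ1 φ2 : X → EReal) (U W : Set X) : EReal :=
  ⨆ V : {V : Set X // EssInt U V}, ⨅ η : {η : ℝ // 0 < η},
    sSup (insert (0 : EReal)
      {v : EReal | ∃ x1 x2 : X, φ1 x1 < ⊤ ∧ x1 ∈ V.1 ∧ φ2 x2 < ⊤ ∧ x2 ∈ V.1 ∧
        dist x1 x2 < η.1 ∧ v = diamond φ1 φ2 W x1 x2})

/-- `Θ†_U(φ1,φ2)` (with the convention `sup ∅ = 0`). -/
def thetaDag {X : Type*} [MetricSpace X] (φ1 φ2 : X → EReal) (U : Set X) : EReal :=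
  thetaDagW φ1 φ2 U U

/-- Indicator function of a set, in the `ℝ ∪ {+∞}` sense. -/
def indFn {X : Type*} (Ω : Set X) : X → EReal := fun x =>
  haveI := Classical.propDecidable (x ∈ Ω)
  if x ∈ Ω then 0 else ⊤

/-- `Λ_U(φ1,φ2)`: the uniform infimum of `(φ1,φ2)` around `U`. -/
def lambdaFull {X : Type*} [MetricSpace X] (φ1 φ2 : X → EReal) (U : Set X) : EReal :=
  ⨆ η : {η : ℝ // 0 < η}, ⨆ ε : {ε : ℝ // 0 < ε},
    sInf {v : EReal | ∃ x1 x2 : X,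
      dist x1 x2 < η.1 ∧ Metric.infDist x1 U < ε.1 ∧ v = φ1 x1 + φ2 x2}

def lambdaCircLeft {X : Type*} [MetricSpace X] (φ1 φ2 : X → EReal) (W : Set X) : EReal :=
  ⨆ η : {η : ℝ // 0 < η},
    sInf {v : EReal | ∃ x1 ∈ W, ∃ x2 : X, dist x1 x2 < η.1 ∧ v = φ1 x1 + φ2 x2}

section MetricSpace

variable {X : Type*} [MetricSpace X] (φ1 φ2 : X → EReal)

lemma lambdaCirc_antitone : Antitone (lambdaCirc φ1 φ2) := by
  intro W W' h
  refine iSup_mono fun η => sInf_le_sInf ?_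
  rintro v ⟨x1, h1, x2, h2, hd, rfl⟩
  exact ⟨x1, h h1, x2, h h2, hd, rfl⟩

lemma lambdaCircLeft_antitone : Antitone (lambdaCircLeft φ1 φ2) := by
  intro W W' h
  refine iSup_mono fun η => sInf_le_sInf ?_
  rintro v ⟨x1, h1, x2, hd, rfl⟩
  exact ⟨x1, h h1, x2, hd, rfl⟩

lemma lambdaCircLeft_le_lambdaCirc (W : Set X) :
    lambdaCircLeft φ1 φ2 W ≤ lambdaCirc φ1 φ2 W := by
  refine iSup_mono fun η => sInf_le_sInf ?_
  rintro v ⟨x1, h1, x2, -, hd, rfl⟩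
  exact ⟨x1, h1, x2, hd, rfl⟩

/-- Once `η ≤ r`, a partner `x2` of `x1 ∈ W` is forced into `W'`. -/
lemma lambdaCirc_le_lambdaCircLeft {W W' : Set X} {r : ℝ} (hr : 0 < r)
    (h : ∀ x ∈ W, ball x r ⊆ W') :
    lambdaCirc φ1 φ2 W' ≤ lambdaCircLeft φ1 φ2 W := by
  refine iSup_le fun η => le_iSup_of_le ⟨min η.1 r, lt_min η.2 hr⟩ (sInf_le_sInf ?_)
  rintro v ⟨x1, hx1, x2, hd, rfl⟩
  exact ⟨x1, h x1 hx1 (mem_ball_self hr), x2,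
    h x1 hx1 (mem_ball'.mpr (hd.trans_le (min_le_right _ _))),
    hd.trans_le (min_le_left _ _), rfl⟩

lemma EssInt.mono {U U' V : Set X} (hV : EssInt U V) (hU : U ⊆ U') : EssInt U' V := by
  obtain ⟨ρ, hρ, hV⟩ := hV
  exact ⟨ρ, hρ, fun v hv => (hV v hv).trans hU⟩

lemma essInt_ball_ball {x₀ : X} {ρ δ : ℝ} (h : ρ < δ) : EssInt (ball x₀ δ) (ball x₀ ρ) :=
  ⟨δ - ρ, sub_pos.mpr h, fun _ hv => ball_subset_ball' (by linarith [mem_ball.mp hv])⟩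

lemma lambdaDag_eq_iInf_of_cofinal {ι : Sort*} {U : Set X} (S : ι → Set X)
    (hS : ∀ i, EssInt U (S i)) (hcofinal : ∀ V, EssInt U V → ∃ i, V ⊆ S i) :
    lambdaDag φ1 φ2 U = ⨅ i, lambdaCirc φ1 φ2 (S i) := by
  refine le_antisymm (iInf_mono' fun i => ⟨⟨S i, hS i⟩, le_rfl⟩) (iInf_mono' fun V => ?_)
  obtain ⟨i, hi⟩ := hcofinal V.1 V.2
  exact ⟨i, lambdaCirc_antitone φ1 φ2 hi⟩

lemma iInf_eq_of_squeeze {α : Type*} [CompleteLattice α] {δ : ℝ} {f g : ℝ → α}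
    (hlow : ∀ ρ j, ρ < j → g j ≤ f ρ) (hup : ∀ ρ, f ρ ≤ g ρ) :
    ⨅ ρ : {ρ : ℝ // 0 < ρ ∧ ρ < δ}, f ρ = ⨅ ρ : {ρ : ℝ // 0 < ρ ∧ ρ < δ}, g ρ := by
  refine le_antisymm (iInf_mono fun ρ => hup ρ) (iInf_mono' fun ρ => ?_)
  obtain ⟨ρ, h0, hδ⟩ := ρ
  exact ⟨⟨(ρ + δ) / 2, by constructor <;> linarith⟩, hlow ρ _ (by linarith)⟩

lemma ball_subset_ball_of_mem_closedBall {x x₀ : X} {ρ j : ℝ} (hx : x ∈ closedBall x₀ ρ) :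
    ball x (j - ρ) ⊆ ball x₀ j :=
  ball_subset_ball' (by linarith [mem_closedBall.mp hx])

end MetricSpace

section NormedSpace

variable {X : Type*} [NormedAddCommGroup X] [NormedSpace ℝ X]

/-- Walk from `v` a distance `r` directly away from `x₀`. -/
lemma dist_add_le_of_ball_subset_closedBall [Nontrivial X] {v x₀ : X} {r δ : ℝ} (hr : 0 < r)
    (h : ball v r ⊆ closedBall x₀ δ) : dist v x₀ + r ≤ δ := by
  have hclosed : closedBall v r ⊆ closedBall x₀ δ :=
    closure_ball v hr.ne' ▸ closure_minimal h isClosed_closedBall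
  obtain ⟨u, hu, hray⟩ : ∃ u : X, ‖u‖ = r ∧ SameRay ℝ (v - x₀) u := by
    by_cases hv : v = x₀
    · obtain ⟨u, hu⟩ := exists_norm_eq X hr.le
      exact ⟨u, hu, by simp [hv]⟩
    · refine ⟨(r / ‖v - x₀‖) • (v - x₀), ?_, SameRay.sameRay_nonneg_smul_right _ (by positivity)⟩
      have : ‖v - x₀‖ ≠ 0 := norm_ne_zero_iff.mpr (sub_ne_zero.mpr hv)
      rw [norm_smul, Real.norm_of_nonneg (by positivity), div_mul_cancel₀ _ this]
  have hw : v + u ∈ closedBall x₀ δ := hclosed (by simp [hu])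
  rwa [mem_closedBall, dist_eq_norm, add_sub_right_comm, hray.norm_add, hu, ← dist_eq_norm] at hw

lemma EssInt.exists_subset_ball {V : Set X} {x₀ : X} {δ : ℝ} (hδ : 0 < δ)
    (hV : EssInt (closedBall x₀ δ) V) : ∃ ρ, 0 < ρ ∧ ρ < δ ∧ V ⊆ ball x₀ ρ := by
  obtain ⟨r, hr, hV⟩ := hV
  refine ⟨δ - min r δ / 2, by linarith [min_le_right r δ], by linarith [lt_min hr hδ],
    fun v hv => mem_ball.mpr ?_⟩
  rcases subsingleton_or_nontrivial X with hX | hX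
  · rw [Subsingleton.elim v x₀, dist_self]
    linarith [min_le_right r δ]
  · linarith [dist_add_le_of_ball_subset_closedBall hr (hV v hv), min_le_left r δ, lt_min hr hδ]

lemma lambdaDag_eq_iInf_lambdaCirc_ball (φ1 φ2 : X → EReal) {U : Set X} {x₀ : X} {δ : ℝ}
    (hδ : 0 < δ) (hU : ball x₀ δ ⊆ U) (hU' : U ⊆ closedBall x₀ δ) :
    lambdaDag φ1 φ2 U = ⨅ ρ : {ρ : ℝ // 0 < ρ ∧ ρ < δ}, lambdaCirc φ1 φ2 (ball x₀ ρ.1) :=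
  lambdaDag_eq_iInf_of_cofinal φ1 φ2 _ (fun ρ => (essInt_ball_ball ρ.2.2).mono hU)
    fun V hV => by
      obtain ⟨ρ, h0, hδ, hsub⟩ := (hV.mono hU').exists_subset_ball hδ
      exact ⟨⟨ρ, h0, hδ⟩, hsub⟩

end NormedSpace

theorem stmt4_general {X : Type*} [NormedAddCommGroup X] [NormedSpace ℝ X]
    (φ1 φ2 : X → EReal)
    (x₀ : X) (δ : ℝ) (hδ : 0 < δ) :
    (lambdaDag φ1 φ2 (Metric.ball x₀ δ) = lambdaDag φ1 φ2 (Metric.closedBall x₀ δ)) ∧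
    (lambdaDag φ1 φ2 (Metric.ball x₀ δ) =
      ⨅ ρ : {ρ : ℝ // 0 < ρ ∧ ρ < δ}, lambdaCirc φ1 φ2 (Metric.ball x₀ ρ.1)) ∧
    (lambdaDag φ1 φ2 (Metric.ball x₀ δ) =
      ⨅ ρ : {ρ : ℝ // 0 < ρ ∧ ρ < δ}, ⨆ η : {η : ℝ // 0 < η},
        sInf {v : EReal | ∃ x1 ∈ Metric.ball x₀ ρ.1, ∃ x2 : X,
          dist x1 x2 < η.1 ∧ v = φ1 x1 + φ2 x2}) ∧
    (lambdaDag φ1 φ2 (Metric.ball x₀ δ) =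
      ⨅ ρ : {ρ : ℝ // 0 < ρ ∧ ρ < δ}, lambdaCirc φ1 φ2 (Metric.closedBall x₀ ρ.1)) ∧
    (lambdaDag φ1 φ2 (Metric.ball x₀ δ) =
      ⨅ ρ : {ρ : ℝ // 0 < ρ ∧ ρ < δ}, ⨆ η : {η : ℝ // 0 < η},
        sInf {v : EReal | ∃ x1 ∈ Metric.closedBall x₀ ρ.1, ∃ x2 : X,
          dist x1 x2 < η.1 ∧ v = φ1 x1 + φ2 x2}) := by
  have hball :=
    lambdaDag_eq_iInf_lambdaCirc_ball φ1 φ2 (x₀ := x₀) hδ subset_rfl ball_subset_closedBall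
  have hclosedBall :=
    lambdaDag_eq_iInf_lambdaCirc_ball φ1 φ2 (x₀ := x₀) hδ ball_subset_closedBall subset_rfl
  have hsqueeze : ∀ ρ j, ρ < j →
      lambdaCirc φ1 φ2 (ball x₀ j) ≤ lambdaCircLeft φ1 φ2 (closedBall x₀ ρ) := fun ρ j h =>
    lambdaCirc_le_lambdaCircLeft φ1 φ2 (sub_pos.mpr h) fun _ => ball_subset_ball_of_mem_closedBall
  have hleft_ball : ⨅ ρ : {ρ : ℝ // 0 < ρ ∧ ρ < δ}, lambdaCircLeft φ1 φ2 (ball x₀ ρ.1) = _ :=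
    iInf_eq_of_squeeze (f := fun ρ => lambdaCircLeft φ1 φ2 (ball x₀ ρ))
      (fun ρ j h => (hsqueeze ρ j h).trans
        (lambdaCircLeft_antitone φ1 φ2 ball_subset_closedBall))
      (fun ρ => lambdaCircLeft_le_lambdaCirc φ1 φ2 _)
  have hcirc_closedBall : ⨅ ρ : {ρ : ℝ // 0 < ρ ∧ ρ < δ},
      lambdaCirc φ1 φ2 (closedBall x₀ ρ.1) = _ :=
    iInf_eq_of_squeeze (f := fun ρ => lambdaCirc φ1 φ2 (closedBall x₀ ρ))
      (fun ρ j h => (hsqueeze ρ j h).trans (lambdaCircLeft_le_lambdaCirc φ1 φ2 _))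
      (fun ρ => lambdaCirc_antitone φ1 φ2 ball_subset_closedBall)
  have hleft_closedBall : ⨅ ρ : {ρ : ℝ // 0 < ρ ∧ ρ < δ},
      lambdaCircLeft φ1 φ2 (closedBall x₀ ρ.1) = _ :=
    iInf_eq_of_squeeze (f := fun ρ => lambdaCircLeft φ1 φ2 (closedBall x₀ ρ)) hsqueeze
      (fun ρ => (lambdaCircLeft_le_lambdaCirc φ1 φ2 _).trans
        (lambdaCirc_antitone φ1 φ2 ball_subset_closedBall))
  exact ⟨hball.trans hclosedBall.symm, hball, hball.trans hleft_ball.symm,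
    hball.trans hcirc_closedBall.symm, hball.trans hleft_closedBall.symm⟩

/-- Representations of `Λ†` over open and closed balls in a normed space. -/
theorem stmt4 {X : Type*} [NormedAddCommGroup X] [NormedSpace ℝ X]
    (φ1 φ2 : X → EReal) (hbot1 : ∀ x, φ1 x ≠ ⊥) (hbot2 : ∀ x, φ2 x ≠ ⊥)
    (x₀ : X) (δ : ℝ) (hδ : 0 < δ)
    (hne : ∃ x ∈ Metric.ball x₀ δ, φ1 x < ⊤ ∧ φ2 x < ⊤) :
    (lambdaDag φ1 φ2 (Metric.ball x₀ δ) = lambdaDag φ1 φ2 (Metric.closedBall x₀ δ)) ∧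
    (lambdaDag φ1 φ2 (Metric.ball x₀ δ) =
      ⨅ ρ : {ρ : ℝ // 0 < ρ ∧ ρ < δ}, lambdaCirc φ1 φ2 (Metric.ball x₀ ρ.1)) ∧
    (lambdaDag φ1 φ2 (Metric.ball x₀ δ) =
      ⨅ ρ : {ρ : ℝ // 0 < ρ ∧ ρ < δ}, ⨆ η : {η : ℝ // 0 < η},
        sInf {v : EReal | ∃ x1 ∈ Metric.ball x₀ ρ.1, ∃ x2 : X,
          dist x1 x2 < η.1 ∧ v = φ1 x1 + φ2 x2}) ∧
    (lambdaDag φ1 φ2 (Metric.ball x₀ δ) =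
      ⨅ ρ : {ρ : ℝ // 0 < ρ ∧ ρ < δ}, lambdaCirc φ1 φ2 (Metric.closedBall x₀ ρ.1)) ∧
    (lambdaDag φ1 φ2 (Metric.ball x₀ δ) =
      ⨅ ρ : {ρ : ℝ // 0 < ρ ∧ ρ < δ}, ⨆ η : {η : ℝ // 0 < η},
        sInf {v : EReal | ∃ x1 ∈ Metric.closedBall x₀ ρ.1, ∃ x2 : X,
          dist x1 x2 < η.1 ∧ v = φ1 x1 + φ2 x2}) :=
  stmt4_general φ1 φ2 x₀ δ hδ
end
end

section
/- The pair (φ1,φ2) is firmly quasiuniformly lower semicontinuous on U (i.e. Θ†_U(φ1,φ2) = 0) if and only if for every pair of sequences {x_{1k}} ⊂ dom φ1 ∩ U and {x_{2k}} ⊂ dom φ2 such that the set {x_{1k} : k ∈ ℕ} is an essentially interior subset of U and d(x_{1k}, x_{2k}) → 0 as k → +∞, there exists a sequence {x_k} ⊂ X such that d(x_k, x_{1k}) → 0, d(x_k, x_{2k}) → 0, and limsup_{k→+∞} ((φ1+φ2)(x_k) − φ1(x_{1k}) − φ2(x_{2k})) ≤ 0. -/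
/-!
Unfolding the suprema, `Θ†_U = 0` says: on every essentially interior `V` and for every `ε > 0`
there is `η > 0` with `(φ1 ♦ φ2)_U (x1, x2) < ε` whenever `x1, x2 ∈ V ∩ dom` are `η`-close.
Given sequences as in the statement, eventually `x_{2k}` lies in a thickening of `{x_{1k}}`,
which is still essentially interior, so `♦(x_{1k}, x_{2k}) → 0`; near-minimisers in the infimum
defining `♦` then give `x_k`. Conversely, if `Θ†_U > 0`, pairs in some `V` with `d(x1, x2) → 0`
and `♦ ≥ ε` form sequences for which any admissible `x_k` would eventually be a point of `U`
making `♦ < ε`.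
-/

open Metric Set Filter

noncomputable section

lemma exists_near_minimizer {α : Type*} [Nonempty α] (f : α → EReal) {δ : ℝ} (hδ : 0 < δ) :
    ∃ a, ∀ r : ℝ, 0 < r → (∃ b, f b < r) → f a < ↑(r + δ) := by
  by_cases htop : ⨅ b, f b = ⊤
  · refine ⟨Classical.arbitrary α, fun r _ ⟨b, hb⟩ => ?_⟩
    exact absurd hb (by simp [(iInf_eq_top.1 htop) b])
  -- Clipping the infimum at `0` makes it finite; since `0 < r`, the clipped value stays below `r`.
  have hs_top : max (⨅ b, f b) 0 ≠ ⊤ := by simp [htop]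
  have hs_bot : max (⨅ b, f b) 0 ≠ ⊥ := (EReal.bot_lt_zero.trans_le (le_max_right _ _)).ne'
  obtain ⟨t, ht⟩ : ∃ t : ℝ, (t : EReal) = max (⨅ b, f b) 0 := ⟨_, EReal.coe_toReal hs_top hs_bot⟩
  obtain ⟨a, ha⟩ : ∃ a, f a < ↑(t + δ) := by
    refine iInf_lt_iff.1 ((le_max_left _ 0).trans_lt ?_)
    rw [← ht]
    exact_mod_cast lt_add_of_pos_right t hδ
  refine ⟨a, fun r hr ⟨b, hb⟩ => ha.trans ?_⟩
  have htr : (t : EReal) < r := ht ▸ max_lt ((iInf_le f b).trans_lt hb) (EReal.coe_pos.2 hr)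
  exact_mod_cast add_lt_add_left (EReal.coe_lt_coe_iff.1 htr) δ

lemma exists_seq_eventually_lt_of_eventually_exists_lt {α : Type*} {m : ℕ → α → EReal}
    (h : ∀ ε : ℝ, 0 < ε → ∀ᶠ k in atTop, ∃ a, m k a < ε) :
    ∃ x : ℕ → α, ∀ ε : ℝ, 0 < ε → ∀ᶠ k in atTop, m k (x k) < ε := by
  have : Nonempty α := by
    obtain ⟨_, a, _⟩ := (h 1 one_pos).exists
    exact ⟨a⟩
  choose x hx using fun k : ℕ => exists_near_minimizer (m k) (Nat.one_div_pos_of_nat (n := k))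
  refine ⟨x, fun ε hε => ?_⟩
  have hk : ∀ᶠ k : ℕ in atTop, 1 / ((k : ℝ) + 1) < ε / 2 :=
    tendsto_one_div_add_atTop_nhds_zero_nat.eventually_lt_const (half_pos hε)
  filter_upwards [h (ε / 2) (half_pos hε), hk] with k hex hk
  refine (hx k _ (half_pos hε) hex).trans ?_
  exact_mod_cast (by linarith : ε / 2 + 1 / ((k : ℝ) + 1) < ε)

lemma tendsto_zero_of_forall_eventually_coe_lt {ι : Type*} {l : Filter ι} {f : ι → ℝ}
    (hf0 : ∀ i, 0 ≤ f i) (hf : ∀ ε : ℝ, 0 < ε → ∀ᶠ i in l, (f i : EReal) < ε) :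
    Tendsto f l (nhds 0) :=
  tendsto_order.2 ⟨fun _ ha => Eventually.of_forall fun i => ha.trans_le (hf0 i),
    fun a ha => (hf a ha).mono fun _ hi => by exact_mod_cast hi⟩

lemma limsup_le_zero_of_forall_eventually_lt {ι : Type*} {l : Filter ι} {g : ι → EReal}
    (hg : ∀ ε : ℝ, 0 < ε → ∀ᶠ i in l, g i < ε) : limsup g l ≤ 0 := by
  rw [← EReal.le_of_forall_lt_iff_le]
  intro ε hε
  exact limsup_le_of_le (by isBoundedDefault) ((hg ε (EReal.coe_pos.1 hε)).mono fun _ hi => hi.le)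

lemma EssInt.exists_thickening {X : Type*} [MetricSpace X] {U V : Set X} (h : EssInt U V) :
    ∃ δ > 0, EssInt U (thickening δ V) := by
  obtain ⟨ρ, hρ, hball⟩ := h
  refine ⟨ρ / 2, half_pos hρ, ρ / 2, half_pos hρ, fun w hw => ?_⟩
  obtain ⟨v, hv, hwv⟩ := mem_thickening_iff.1 hw
  exact (ball_subset_ball' (by linarith)).trans (hball v hv)

section Diamond

variable {X : Type*} [MetricSpace X] {φ1 φ2 : X → EReal} {U : Set X}

lemma diamond_lt_iff {W : Set X} {x1 x2 : X} {c : EReal} :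
    diamond φ1 φ2 W x1 x2 < c ↔ ∃ x ∈ W, ((dist x x1 : ℝ) : EReal) < c ∧
      ((dist x x2 : ℝ) : EReal) < c ∧ φ1 x + φ2 x - φ1 x1 - φ2 x2 < c := by
  simp [diamond, sInf_lt_iff, and_assoc]

lemma thetaDag_nonneg : 0 ≤ thetaDag φ1 φ2 U :=
  le_iSup_of_le ⟨∅, 1, one_pos, fun _ hv => hv.elim⟩ (le_iInf fun _ => le_sSup (mem_insert _ _))

lemma thetaDag_eq_zero_iff :
    thetaDag φ1 φ2 U = 0 ↔ ∀ V, EssInt U V → ∀ ε : ℝ, 0 < ε → ∃ η > (0 : ℝ), ∀ x1 x2,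
      φ1 x1 < ⊤ → x1 ∈ V → φ2 x2 < ⊤ → x2 ∈ V → dist x1 x2 < η →
      diamond φ1 φ2 U x1 x2 < ε := by
  rw [le_antisymm_iff, and_iff_left thetaDag_nonneg, thetaDag, thetaDagW, iSup_le_iff,
    Subtype.forall]
  refine forall_congr' fun V => forall_congr' fun _ => ⟨fun h ε hε => ?_, fun h => ?_⟩
  · obtain ⟨⟨η, hη⟩, hS⟩ := iInf_lt_iff.1 (h.trans_lt (EReal.coe_pos.2 hε))
    refine ⟨η, hη, fun x1 x2 h1 hx1 h2 hx2 hd => (le_sSup ?_).trans_lt hS⟩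
    exact mem_insert_of_mem _ ⟨x1, x2, h1, hx1, h2, hx2, hd, rfl⟩
  · rw [← EReal.le_of_forall_lt_iff_le]
    intro ε hε
    obtain ⟨η, hη, hdia⟩ := h ε (EReal.coe_pos.1 hε)
    refine iInf_le_of_le ⟨η, hη⟩ (sSup_le ?_)
    rintro _ (rfl | ⟨x1, x2, h1, hx1, h2, hx2, hd, rfl⟩)
    exacts [hε.le, (hdia x1 x2 h1 hx1 h2 hx2 hd).le]

end Diamond

section Sequential

variable {X : Type*} [MetricSpace X] {φ1 φ2 : X → EReal} {U : Set X}

lemma exists_seq_of_thetaDag_eq_zero (h : thetaDag φ1 φ2 U = 0) {x1 x2 : ℕ → X}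
    (hx1 : ∀ k, φ1 (x1 k) < ⊤) (hx2 : ∀ k, φ2 (x2 k) < ⊤) (hEI : EssInt U (range x1))
    (hdist : Tendsto (fun k => dist (x1 k) (x2 k)) atTop (nhds 0)) :
    ∃ x : ℕ → X,
      Tendsto (fun k => dist (x k) (x1 k)) atTop (nhds 0) ∧
      Tendsto (fun k => dist (x k) (x2 k)) atTop (nhds 0) ∧
      limsup (fun k => φ1 (x k) + φ2 (x k) - φ1 (x1 k) - φ2 (x2 k)) atTop ≤ 0 := by
  obtain ⟨δ, hδ, hV⟩ := hEI.exists_thickening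
  have hsmall : ∀ ε : ℝ, 0 < ε → ∀ᶠ k in atTop, ∃ y : X,
      max (max ((dist y (x1 k) : ℝ) : EReal) ((dist y (x2 k) : ℝ) : EReal))
        (φ1 y + φ2 y - φ1 (x1 k) - φ2 (x2 k)) < ε := by
    intro ε hε
    obtain ⟨η, hη, hdia⟩ := thetaDag_eq_zero_iff.1 h _ hV ε hε
    filter_upwards [hdist.eventually_lt_const hη, hdist.eventually_lt_const hδ] with k hkη hkδ
    have hx1V : x1 k ∈ thickening δ (range x1) := self_subset_thickening hδ _ (mem_range_self k)
    have hx2V : x2 k ∈ thickening δ (range x1) :=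
      mem_thickening_iff.2 ⟨x1 k, mem_range_self k, by rwa [dist_comm]⟩
    obtain ⟨y, -, hy1, hy2, hy3⟩ :=
      diamond_lt_iff.1 (hdia (x1 k) (x2 k) (hx1 k) hx1V (hx2 k) hx2V hkη)
    exact ⟨y, max_lt (max_lt hy1 hy2) hy3⟩
  obtain ⟨x, hx⟩ := exists_seq_eventually_lt_of_eventually_exists_lt hsmall
  simp only [max_lt_iff] at hx
  exact ⟨x, tendsto_zero_of_forall_eventually_coe_lt (fun _ => dist_nonneg)
      fun ε hε => (hx ε hε).mono fun _ hk => hk.1.1,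
    tendsto_zero_of_forall_eventually_coe_lt (fun _ => dist_nonneg)
      fun ε hε => (hx ε hε).mono fun _ hk => hk.1.2,
    limsup_le_zero_of_forall_eventually_lt fun ε hε => (hx ε hε).mono fun _ hk => hk.2⟩

lemma thetaDag_eq_zero_of_exists_seq
    (h : ∀ x1 x2 : ℕ → X, (∀ k, φ1 (x1 k) < ⊤ ∧ x1 k ∈ U) → (∀ k, φ2 (x2 k) < ⊤) →
      EssInt U (range x1) → Tendsto (fun k => dist (x1 k) (x2 k)) atTop (nhds 0) →
      ∃ x : ℕ → X,
        Tendsto (fun k => dist (x k) (x1 k)) atTop (nhds 0) ∧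
        Tendsto (fun k => dist (x k) (x2 k)) atTop (nhds 0) ∧
        limsup (fun k => φ1 (x k) + φ2 (x k) - φ1 (x1 k) - φ2 (x2 k)) atTop ≤ 0) :
    thetaDag φ1 φ2 U = 0 := by
  refine thetaDag_eq_zero_iff.2 fun V hV ε hε => ?_
  by_contra! hbad
  choose a1 a2 h1 hV1 h2 hV2 hd hdia using
    fun k : ℕ => hbad (1 / ((k : ℝ) + 1)) Nat.one_div_pos_of_nat
  obtain ⟨ρ, hρ, hball⟩ := hV
  have hd0 : Tendsto (fun k => dist (a1 k) (a2 k)) atTop (nhds 0) :=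
    squeeze_zero (fun _ => dist_nonneg) (fun k => (hd k).le)
      tendsto_one_div_add_atTop_nhds_zero_nat
  obtain ⟨x, hx1, hx2, hls⟩ := h a1 a2 (fun k => ⟨h1 k, hball _ (hV1 k) (mem_ball_self hρ)⟩) h2
    ⟨ρ, hρ, forall_mem_range.2 fun k => hball _ (hV1 k)⟩ hd0
  obtain ⟨k, hk1, hk2, hk3⟩ := ((hx1.eventually_lt_const (lt_min hε hρ)).and
    ((hx2.eventually_lt_const hε).and
      (eventually_lt_of_limsup_lt (hls.trans_lt (EReal.coe_pos.2 hε))))).exists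
  have hxU : x k ∈ U := hball _ (hV1 k) (mem_ball.2 (hk1.trans_le (min_le_right _ _)))
  refine (hdia k).not_gt (diamond_lt_iff.2 ⟨x k, hxU, ?_, ?_, hk3⟩)
  · exact EReal.coe_lt_coe_iff.2 (hk1.trans_le (min_le_left _ _))
  · exact EReal.coe_lt_coe_iff.2 hk2

end Sequential

theorem stmt10_general {X : Type*} [MetricSpace X] (φ1 φ2 : X → EReal) (U : Set X) :
    thetaDag φ1 φ2 U = 0 ↔
      ∀ x1 x2 : ℕ → X,
        (∀ k, φ1 (x1 k) < ⊤ ∧ x1 k ∈ U) →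
        (∀ k, φ2 (x2 k) < ⊤) →
        EssInt U (Set.range x1) →
        Filter.Tendsto (fun k => dist (x1 k) (x2 k)) Filter.atTop (nhds 0) →
        ∃ x : ℕ → X,
          Filter.Tendsto (fun k => dist (x k) (x1 k)) Filter.atTop (nhds 0) ∧
          Filter.Tendsto (fun k => dist (x k) (x2 k)) Filter.atTop (nhds 0) ∧
          Filter.limsup (fun k => φ1 (x k) + φ2 (x k) - φ1 (x1 k) - φ2 (x2 k))
            Filter.atTop ≤ 0 :=
  ⟨fun h _ _ hx1 hx2 hEI hdist =>
      exists_seq_of_thetaDag_eq_zero h (fun k => (hx1 k).1) hx2 hEI hdist,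
    thetaDag_eq_zero_of_exists_seq⟩

/-- Sequential characterization of firm quasiuniform lower semicontinuity. -/
theorem stmt10 {X : Type*} [MetricSpace X] (φ1 φ2 : X → EReal)
    (hbot1 : ∀ x, φ1 x ≠ ⊥) (hbot2 : ∀ x, φ2 x ≠ ⊥) (U : Set X)
    (hne : ∃ x ∈ U, φ1 x < ⊤ ∧ φ2 x < ⊤) :
    thetaDag φ1 φ2 U = 0 ↔
      ∀ x1 x2 : ℕ → X,
        (∀ k, φ1 (x1 k) < ⊤ ∧ x1 k ∈ U) →
        (∀ k, φ2 (x2 k) < ⊤) →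
        EssInt U (Set.range x1) →
        Filter.Tendsto (fun k => dist (x1 k) (x2 k)) Filter.atTop (nhds 0) →
        ∃ x : ℕ → X,
          Filter.Tendsto (fun k => dist (x k) (x1 k)) Filter.atTop (nhds 0) ∧
          Filter.Tendsto (fun k => dist (x k) (x2 k)) Filter.atTop (nhds 0) ∧
          Filter.limsup (fun k => φ1 (x k) + φ2 (x k) - φ1 (x1 k) - φ2 (x2 k))
            Filter.atTop ≤ 0 :=
  stmt10_general φ1 φ2 U
end
end

section
/- Suppose the pair (φ1,φ2) is firmly uniformly (respectively, firmly quasiuniformly) lower semicontinuous on U, and let g : X → ℝ be uniformly continuous on U. Then the pair (φ1, φ2 + g) is firmly uniformly (respectively, firmly quasiuniformly) lower semicontinuous on U. -/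
open Metric Set Filter

noncomputable section

/-! If `(φ1 ♦ φ2)_U(x1, x2) < r`, some `x ∈ U` within `r` of `x1` and `x2` has excess
`(φ1 + φ2)(x) - φ1(x1) - φ2(x2) < r`. Taking `r` below the modulus of uniform continuity of `g`
for `ε / 2`, the same `x` has excess below `r + ε / 2` for `(φ1, φ2 + g)`, so
`(φ1 ♦ (φ2 + g))_U(x1, x2) ≤ r + ε / 2 ≤ ε` for all pairs that were controlled for `(φ1, φ2)`. -/

section

variable {X : Type*} [MetricSpace X]

def diamondSup (φ1 φ2 : X → EReal) (V W : Set X) (η : ℝ) : EReal :=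
  sSup (insert (0 : EReal)
    {v : EReal | ∃ x1 x2 : X, φ1 x1 < ⊤ ∧ x1 ∈ V ∧ φ2 x2 < ⊤ ∧ x2 ∈ V ∧
      dist x1 x2 < η ∧ v = diamond φ1 φ2 W x1 x2})

lemma thetaCirc_eq_iInf_diamondSup (φ1 φ2 : X → EReal) (U : Set X) :
    thetaCirc φ1 φ2 U = ⨅ η : {η : ℝ // 0 < η}, diamondSup φ1 φ2 U U η :=
  rfl

lemma thetaDag_eq_iSup_iInf_diamondSup (φ1 φ2 : X → EReal) (U : Set X) :
    thetaDag φ1 φ2 U =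
      ⨆ V : {V : Set X // EssInt U V}, ⨅ η : {η : ℝ // 0 < η}, diamondSup φ1 φ2 V.1 U η :=
  rfl

lemma zero_le_diamondSup (φ1 φ2 : X → EReal) (V W : Set X) (η : ℝ) :
    0 ≤ diamondSup φ1 φ2 V W η :=
  le_sSup (mem_insert _ _)

lemma EssInt.subset {U V : Set X} (h : EssInt U V) : V ⊆ U := by
  obtain ⟨ρ, hρ, hball⟩ := h
  exact fun v hv => hball v hv (mem_ball_self hρ)

lemma essInt_empty (U : Set X) : EssInt U ∅ :=
  ⟨1, one_pos, by simp⟩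

lemma diamond_add_le {φ1 φ2 : X → EReal} {g : X → ℝ} {W : Set X} {x1 x2 : X} {r c : ℝ}
    (hbot1 : ∀ x, φ1 x ≠ ⊥) (hbot2 : ∀ x, φ2 x ≠ ⊥) (h1 : φ1 x1 < ⊤) (h2 : φ2 x2 < ⊤)
    (hc : 0 ≤ c) (hg : ∀ x ∈ W, dist x x2 < r → g x ≤ g x2 + c)
    (hlt : diamond φ1 φ2 W x1 x2 < r) :
    diamond φ1 (fun x => φ2 x + g x) W x1 x2 ≤ (r + c : ℝ) := by
  rw [diamond, sInf_lt_iff] at hlt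
  obtain ⟨_, ⟨x, hxW, rfl⟩, hx⟩ := hlt
  simp only [max_lt_iff, EReal.coe_lt_coe_iff] at hx
  obtain ⟨⟨hd1, hd2⟩, hexcess⟩ := hx
  lift φ1 x1 to ℝ using ⟨h1.ne, hbot1 x1⟩ with a1 ha1
  lift φ2 x2 to ℝ using ⟨h2.ne, hbot2 x2⟩ with a2 ha2
  have hsum_ne_top : φ1 x + φ2 x ≠ ⊤ := by
    intro htop
    rw [htop, EReal.top_sub_coe, EReal.top_sub_coe] at hexcess
    exact not_top_lt hexcess
  have hsum_ne_bot : φ1 x + φ2 x ≠ ⊥ := by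
    simpa [EReal.add_eq_bot_iff] using ⟨hbot1 x, hbot2 x⟩
  lift φ1 x + φ2 x to ℝ using ⟨hsum_ne_top, hsum_ne_bot⟩ with s hs
  rw [← EReal.coe_sub, ← EReal.coe_sub, EReal.coe_lt_coe_iff] at hexcess
  have hgx := hg x hxW hd2
  refine sInf_le_of_le ⟨x, hxW, rfl⟩ (max_le (max_le ?_ ?_) ?_)
  · exact EReal.coe_le_coe_iff.mpr (by linarith)
  · exact EReal.coe_le_coe_iff.mpr (by linarith)
  · show φ1 x + (φ2 x + g x) - φ1 x1 - (φ2 x2 + g x2) ≤ (r + c : ℝ)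
    rw [← add_assoc, ← hs, ← ha1, ← ha2]
    exact_mod_cast (by linarith : s + g x - a1 - (a2 + g x2) ≤ r + c)

lemma diamondSup_add_le {φ1 φ2 : X → EReal} {g : X → ℝ} {V W : Set X} {η r c : ℝ}
    (hbot1 : ∀ x, φ1 x ≠ ⊥) (hbot2 : ∀ x, φ2 x ≠ ⊥) (hc : 0 ≤ c) (hr : 0 ≤ r)
    (hg : ∀ x ∈ W, ∀ y ∈ V, dist x y < r → g x ≤ g y + c)
    (hlt : diamondSup φ1 φ2 V W η < r) :
    diamondSup φ1 (fun x => φ2 x + g x) V W η ≤ (r + c : ℝ) := by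
  refine sSup_le ?_
  rintro _ (rfl | ⟨x1, x2, h1, hx1, h2, hx2, hd, rfl⟩)
  · exact_mod_cast add_nonneg hr hc
  have h2' : φ2 x2 < ⊤ := lt_top_iff_ne_top.2 <|
    (EReal.add_ne_top_iff_ne_top_left (EReal.coe_ne_bot _) (EReal.coe_ne_top _)).1 h2.ne
  have hle : diamond φ1 φ2 W x1 x2 ≤ diamondSup φ1 φ2 V W η :=
    le_sSup (mem_insert_of_mem _ ⟨x1, x2, h1, hx1, h2', hx2, hd, rfl⟩)
  exact diamond_add_le hbot1 hbot2 h1 h2' hc (fun x hx => hg x hx x2 hx2) (hle.trans_lt hlt)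

lemma iInf_diamondSup_add_le_zero {φ1 φ2 : X → EReal} {g : X → ℝ} {U V : Set X}
    (hbot1 : ∀ x, φ1 x ≠ ⊥) (hbot2 : ∀ x, φ2 x ≠ ⊥) (hg : UniformContinuousOn g U)
    (hVU : V ⊆ U) (h : ⨅ η : {η : ℝ // 0 < η}, diamondSup φ1 φ2 V U η ≤ 0) :
    ⨅ η : {η : ℝ // 0 < η}, diamondSup φ1 (fun x => φ2 x + g x) V U η ≤ 0 := by
  refine EReal.le_of_forall_lt_iff_le.1 fun ε hε => ?_
  replace hε : 0 < ε := EReal.coe_pos.1 hε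
  obtain ⟨δ, hδ, hgδ⟩ := Metric.uniformContinuousOn_iff.1 hg (ε / 2) (by positivity)
  set r := min (ε / 2) δ
  have hr : 0 < r := lt_min (by positivity) hδ
  obtain ⟨η, hη⟩ := iInf_lt_iff.1 (h.trans_lt (EReal.coe_pos.2 hr))
  have hgr : ∀ x ∈ U, ∀ y ∈ V, dist x y < r → g x ≤ g y + ε / 2 := fun x hx y hy hxy =>
    by linarith [abs_sub_lt_iff.1 (hgδ x hx y (hVU hy) (hxy.trans_le (min_le_right _ _)))]
  calc _ ≤ diamondSup φ1 (fun x => φ2 x + g x) V U η := iInf_le _ η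
    _ ≤ (r + ε / 2 : ℝ) := diamondSup_add_le hbot1 hbot2 (by positivity) hr.le hgr hη
    _ ≤ ε := EReal.coe_le_coe_iff.2 (by linarith [min_le_left (ε / 2) δ])

end

theorem stmt11_general {X : Type*} [MetricSpace X] (φ1 φ2 : X → EReal) (g : X → ℝ)
    (hbot1 : ∀ x, φ1 x ≠ ⊥) (hbot2 : ∀ x, φ2 x ≠ ⊥) (U : Set X)
    (hg : UniformContinuousOn g U) :
    (thetaCirc φ1 φ2 U = 0 →
      thetaCirc φ1 (fun x => φ2 x + (g x : EReal)) U = 0) ∧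
    (thetaDag φ1 φ2 U = 0 →
      thetaDag φ1 (fun x => φ2 x + (g x : EReal)) U = 0) := by
  simp only [thetaCirc_eq_iInf_diamondSup, thetaDag_eq_iSup_iInf_diamondSup]
  refine ⟨fun h => le_antisymm ?_ ?_, fun h => le_antisymm ?_ ?_⟩
  · exact iInf_diamondSup_add_le_zero hbot1 hbot2 hg subset_rfl h.le
  · exact le_iInf fun η => zero_le_diamondSup _ _ _ _ _
  · refine iSup_le fun V => iInf_diamondSup_add_le_zero hbot1 hbot2 hg V.2.subset ?_
    exact iSup_le_iff.1 h.le V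
  · exact le_iSup_of_le ⟨∅, essInt_empty U⟩ (le_iInf fun η => zero_le_diamondSup _ _ _ _ _)

/-- Firm uniform and firm quasiuniform lower semicontinuity are stable under
uniformly continuous perturbations of one of the functions. -/
theorem stmt11 {X : Type*} [MetricSpace X] (φ1 φ2 : X → EReal) (g : X → ℝ)
    (hbot1 : ∀ x, φ1 x ≠ ⊥) (hbot2 : ∀ x, φ2 x ≠ ⊥) (U : Set X)
    (hne : ∃ x ∈ U, φ1 x < ⊤ ∧ φ2 x < ⊤)
    (hg : UniformContinuousOn g U) :
    (thetaCirc φ1 φ2 U = 0 →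
      thetaCirc φ1 (fun x => φ2 x + (g x : EReal)) U = 0) ∧
    (thetaDag φ1 φ2 U = 0 →
      thetaDag φ1 (fun x => φ2 x + (g x : EReal)) U = 0) :=
  stmt11_general φ1 φ2 g hbot1 hbot2 U hg
end
end
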